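/- Let v, w ∈ ℝ² with w ≠ v and w ≠ −v, and for δ ∈ ℝ let M_δ : ℝ² → ℝ² be the linear shear map M_δ(x, y) = (x + δy, y). Then the set { δ ∈ ℝ : ‖M_δ v‖ = ‖M_δ w‖ } has at most two elements, where ‖·‖ denotes the Euclidean norm. -/

import Mathlib

open MeasureTheory

noncomputable section

/-- The Euclidean plane. -/
abbrev Plane : Type := EuclideanSpace ℝ (Fin 2)

/-- A triangle is the convex hull of three affinely independent points. -/
def IsTriangle (T : Set Plane) : Prop :=
  ∃ p q r : Plane, AffineIndependent ℝ ![p, q, r] ∧ T = convexHull ℝ {p, q, r}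

/-- Two subsets of the plane are congruent if one is the image of the other under
an isometry of the plane (reflections allowed). -/
def PlaneCongruent (A B : Set Plane) : Prop :=
  ∃ f : Plane ≃ᵢ Plane, f '' A = B

/-- A tiling of `A ⊆ ℝ²`: a countable collection of compact sets whose interiors are
pairwise disjoint and whose union is `A`. -/
def IsTilingOf (𝒯 : Set (Set Plane)) (A : Set Plane) : Prop :=
  𝒯.Countable ∧ (∀ T ∈ 𝒯, IsCompact T) ∧
    (∀ T ∈ 𝒯, ∀ T' ∈ 𝒯, T ≠ T' → interior T ∩ interior T' = ∅) ∧
    ⋃₀ 𝒯 = A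

/-- A vertex of a (convex polygonal) tile is an extreme point of it. -/
def IsVertexOf (p : Plane) (T : Set Plane) : Prop := p ∈ Set.extremePoints ℝ T

/-- An edge of a convex polygon: a nondegenerate segment between two vertices that
lies in the frontier of the polygon. -/
def IsEdgeOf (e : Set Plane) (T : Set Plane) : Prop :=
  ∃ u v : Plane, u ≠ v ∧ IsVertexOf u T ∧ IsVertexOf v T ∧
    e = segment ℝ u v ∧ e ⊆ frontier T

/-- A tiling by convex polygons is vertex-to-vertex if the intersection of any two
distinct tiles is empty, a common vertex, or a common entire edge. -/
def IsVertexToVertex (𝒯 : Set (Set Plane)) : Prop :=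
  ∀ T ∈ 𝒯, ∀ T' ∈ 𝒯, T ≠ T' →
    T ∩ T' = ∅ ∨
    (∃ p : Plane, T ∩ T' = {p} ∧ IsVertexOf p T ∧ IsVertexOf p T') ∨
    (IsEdgeOf (T ∩ T') T ∧ IsEdgeOf (T ∩ T') T')

/-- A convex polygon with exactly `n` vertices: a compact convex set whose set of
extreme points is finite with exactly `n` elements. -/
def IsConvexPolygon (n : ℕ) (T : Set Plane) : Prop :=
  IsCompact T ∧ Convex ℝ T ∧ (Set.extremePoints ℝ T).Finite ∧
    (Set.extremePoints ℝ T).ncard = n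

/-- `A ≃ B`: `B` is the image of `A` under `z ↦ s·z + t` with `s ∈ {1, -1}`. -/
def TransCong (A B : Set Plane) : Prop :=
  ∃ s : ℝ, (s = 1 ∨ s = -1) ∧ ∃ t : Plane, B = (fun z => s • z + t) '' A

/-- The shear map `M_δ (x, y) = (x + δy, y)`. -/
def shear (δ : ℝ) (p : Plane) : Plane :=
  (WithLp.equiv 2 (Fin 2 → ℝ)).symm ![p 0 + δ * p 1, p 1]

/-!
`‖M_δ u‖² = u₁² δ² + 2 u₀ u₁ δ + ‖u‖²` is quadratic in `δ`, so the shear parameters with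
`‖M_δ v‖ = ‖M_δ w‖` are the roots of the difference of two such quadratics. That difference
vanishes identically only when `v₀² = w₀²`, `v₁² = w₁²` and `v₀ v₁ = w₀ w₁`, which forces
`w = ±v`; otherwise it has at most two roots.
-/

open Polynomial in
theorem encard_setOf_quadratic_eq_zero_le_two {R : Type*} [CommRing R] [IsDomain R] {a b c : R}
    (h : a ≠ 0 ∨ b ≠ 0 ∨ c ≠ 0) : {x : R | a * x ^ 2 + b * x + c = 0}.encard ≤ 2 := by
  classical
  set p : R[X] := C a * X ^ 2 + C b * X + C c
  have hp : p ≠ 0 := by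
    contrapose! h
    refine ⟨?_, ?_, ?_⟩
    · simpa [p] using congr_arg (coeff · 2) h
    · simpa [p] using congr_arg (coeff · 1) h
    · simpa [p] using congr_arg (coeff · 0) h
  have hroots : {x : R | a * x ^ 2 + b * x + c = 0} = (p.roots.toFinset : Set R) := by
    ext x
    simp [p, mem_roots hp]
  rw [hroots, Set.encard_coe_eq_coe_finsetCard]
  exact_mod_cast (Multiset.toFinset_card_le _).trans (p.card_roots'.trans natDegree_quadratic_le)

theorem eq_and_eq_or_eq_neg_and_eq_neg_of_sq_eq_sq_of_mul_eq_mul {R : Type*} [CommRing R]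
    [NoZeroDivisors R] {a b c d : R} (ha : a ^ 2 = c ^ 2) (hb : b ^ 2 = d ^ 2)
    (hab : a * b = c * d) : (a = c ∧ b = d) ∨ (a = -c ∧ b = -d) := by
  -- `(a d - c b)² = (a b - c d)² + (a² - c²)(d² - b²)`
  have hcross : a * d = c * b := by
    apply sub_eq_zero.mp
    apply (pow_eq_zero_iff two_ne_zero).mp
    linear_combination (a * b - c * d) * hab - (a ^ 2 - c ^ 2) * hb
  have h₁ : (a - c) * (a + c) = 0 := by linear_combination ha
  have h₂ : (b - d) * (b + d) = 0 := by linear_combination hb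
  have h₃ : (a - c) * (b + d) = 0 := by linear_combination hab + hcross
  have h₄ : (a + c) * (b - d) = 0 := by linear_combination hab - hcross
  by_cases hac : a + c = 0
  · by_cases hbd : b + d = 0
    · exact Or.inr ⟨eq_neg_of_add_eq_zero_left hac, eq_neg_of_add_eq_zero_left hbd⟩
    · exact Or.inl ⟨sub_eq_zero.mp ((mul_eq_zero.mp h₃).resolve_right hbd),
        sub_eq_zero.mp ((mul_eq_zero.mp h₂).resolve_right hbd)⟩
  · exact Or.inl ⟨sub_eq_zero.mp ((mul_eq_zero.mp h₁).resolve_right hac),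
      sub_eq_zero.mp ((mul_eq_zero.mp h₄).resolve_left hac)⟩

theorem norm_shear_sq (δ : ℝ) (u : Plane) :
    ‖shear δ u‖ ^ 2 = u 1 ^ 2 * δ ^ 2 + 2 * (u 0 * u 1) * δ + (u 0 ^ 2 + u 1 ^ 2) := by
  rw [EuclideanSpace.norm_sq_eq]
  simp [shear, Fin.sum_univ_two]
  ring

theorem Plane.eq_or_eq_neg_of_sq_eq_sq_of_mul_eq_mul {v w : Plane} (h0 : w 0 ^ 2 = v 0 ^ 2)
    (h1 : w 1 ^ 2 = v 1 ^ 2) (h01 : w 0 * w 1 = v 0 * v 1) : w = v ∨ w = -v := by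
  rcases eq_and_eq_or_eq_neg_and_eq_neg_of_sq_eq_sq_of_mul_eq_mul h0 h1 h01 with
    ⟨e0, e1⟩ | ⟨e0, e1⟩
  · exact Or.inl (by ext i; fin_cases i <;> simp [e0, e1])
  · exact Or.inr (by ext i; fin_cases i <;> simp [e0, e1])

/-- If `w ≠ v` and `w ≠ −v`, then the set of shear parameters `δ` with
`‖M_δ v‖ = ‖M_δ w‖` has at most two elements. -/
theorem statement15 (v w : Plane) (hvw : w ≠ v) (hvw' : w ≠ -v) :
    {δ : ℝ | ‖shear δ v‖ = ‖shear δ w‖}.encard ≤ 2 := by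
  have hcoeff : v 1 ^ 2 - w 1 ^ 2 ≠ 0 ∨ 2 * (v 0 * v 1) - 2 * (w 0 * w 1) ≠ 0 ∨
      (v 0 ^ 2 + v 1 ^ 2) - (w 0 ^ 2 + w 1 ^ 2) ≠ 0 := by
    by_contra! ⟨ha, hb, hc⟩
    rcases Plane.eq_or_eq_neg_of_sq_eq_sq_of_mul_eq_mul (v := v) (w := w)
      (by linear_combination ha - hc) (by linear_combination -ha) (by linear_combination -hb / 2)
      with h | h
    exacts [hvw h, hvw' h]
  calc {δ : ℝ | ‖shear δ v‖ = ‖shear δ w‖}.encard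
      = {δ : ℝ | (v 1 ^ 2 - w 1 ^ 2) * δ ^ 2 + (2 * (v 0 * v 1) - 2 * (w 0 * w 1)) * δ +
          ((v 0 ^ 2 + v 1 ^ 2) - (w 0 ^ 2 + w 1 ^ 2)) = 0}.encard := by
        congr 1
        ext δ
        rw [Set.mem_ofPred_eq, Set.mem_ofPred_eq, ← sq_eq_sq₀ (norm_nonneg _) (norm_nonneg _),
          norm_shear_sq, norm_shear_sq, ← sub_eq_zero]
        ring_nf
    _ ≤ 2 := encard_setOf_quadratic_eq_zero_le_two hcoeff
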